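/- arXiv:1807.02060 — 2 statements merged into one kernel-verified Lean document; each statement's English description precedes it below -/
import Mathlib

section
/- Let ω ⊂ ℝ² be open and connected, y₀ : ω → ℝ³ smooth with linearly independent partial derivatives, and b₀ : ω → ℝ³ smooth such that Q₀ = [∂₁y₀, ∂₂y₀, b₀] is invertible at every point. Suppose V ∈ W^{2,2}(ω, ℝ³) satisfies ((∇y₀)ᵀ∇V)_sym = 0, and define p by p = −Q₀^{−T}·(((∇V)ᵀ b₀), 0)ᵀ. If moreover (∇y₀)ᵀ∇p + (∇V)ᵀ∇b₀ = 0 on ω, then the matrix field S = [∇V, p]·Q₀^{−1} takes values in skew-symmetric matrices and is constant on ω; consequently V = S·y₀ + c for some fixed skew-symmetric S ∈ so(3) and constant vector c ∈ ℝ³. -/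
open Matrix

/-- Partial derivative `∂ᵢ` of a map `ℝ² → ℝ³`. -/
noncomputable def pder (i : Fin 2) (f : (Fin 2 → ℝ) → (Fin 3 → ℝ)) (x : Fin 2 → ℝ) :
    Fin 3 → ℝ :=
  fderiv ℝ f x (Pi.single i 1)

/-- The matrix `Q₀ = [∂₁y₀, ∂₂y₀, b₀]` with the indicated columns. -/
noncomputable def Q0mat (y0 b0 : (Fin 2 → ℝ) → (Fin 3 → ℝ)) (x : Fin 2 → ℝ) :
    Matrix (Fin 3) (Fin 3) ℝ :=
  Matrix.of fun a k => if k = 0 then pder 0 y0 x a else if k = 1 then pder 1 y0 x a else b0 x a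

/-- The matrix `[∂₁V, ∂₂V, p]` with the indicated columns. -/
noncomputable def colsVp (V : (Fin 2 → ℝ) → (Fin 3 → ℝ)) (p : (Fin 2 → ℝ) → (Fin 3 → ℝ))
    (x : Fin 2 → ℝ) : Matrix (Fin 3) (Fin 3) ℝ :=
  Matrix.of fun a k => if k = 0 then pder 0 V x a else if k = 1 then pder 1 V x a else p x a


namespace AuxIK


lemma isConst_of_hasFDerivAt_zero {E F : Type*} [NormedAddCommGroup E] [NormedSpace ℝ E]
    [NormedAddCommGroup F] [NormedSpace ℝ F]
    {s : Set E} (hs : IsOpen s) (hc : IsPreconnected s) {f : E → F}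
    (hf : ∀ x ∈ s, HasFDerivAt f (0 : E →L[ℝ] F) x) :
    ∀ x ∈ s, ∀ y ∈ s, f y = f x := by
  intro x hx
  have key : ∀ z ∈ s, ∃ ε > 0, Metric.ball z ε ⊆ s ∧ ∀ w ∈ Metric.ball z ε, f w = f z := by
    intro z hz
    obtain ⟨ε, hε, hball⟩ := Metric.isOpen_iff.1 hs z hz
    refine ⟨ε, hε, hball, fun w hw => ?_⟩
    refine (convex_ball z ε).is_const_of_fderivWithin_eq_zero
      (fun w hw => ((hf w (hball hw)).differentiableAt).differentiableWithinAt) ?_ hw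
      (Metric.mem_ball_self hε)
    intro w hw
    rw [fderivWithin_of_isOpen Metric.isOpen_ball hw]
    exact (hf w (hball hw)).fderiv
  have hu : IsOpen {z | z ∈ s ∧ f z = f x} := by
    rw [Metric.isOpen_iff]
    rintro z ⟨hz, hfz⟩
    obtain ⟨ε, hε, hball, hcon⟩ := key z hz
    exact ⟨ε, hε, fun w hw => ⟨hball hw, (hcon w hw).trans hfz⟩⟩
  have hv : IsOpen {z | z ∈ s ∧ f z ≠ f x} := by
    rw [Metric.isOpen_iff]
    rintro z ⟨hz, hfz⟩
    obtain ⟨ε, hε, hball, hcon⟩ := key z hz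
    exact ⟨ε, hε, fun w hw => ⟨hball hw, by rw [hcon w hw]; exact hfz⟩⟩
  have hsub : s ⊆ {z | z ∈ s ∧ f z = f x} := by
    refine IsPreconnected.subset_left_of_subset_union hu hv ?_ ?_ ⟨x, hx, hx, rfl⟩ hc
    · exact Set.disjoint_left.2 (fun z hz hz' => hz'.2 hz.2)
    · intro z hz
      by_cases h : f z = f x
      · exact Or.inl ⟨hz, h⟩
      · exact Or.inr ⟨hz, h⟩
  exact fun y hy => (hsub hy).2

lemma comp_proj_diff {E : Type*} [NormedAddCommGroup E] [NormedSpace ℝ E]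
    {f : E → (Fin 3 → ℝ)} {x : E} (hf : DifferentiableAt ℝ f x) (a : Fin 3) :
    DifferentiableAt ℝ (fun y => f y a) x := by
  have h := (ContinuousLinearMap.proj (R := ℝ) (φ := fun _ : Fin 3 => ℝ) a).hasFDerivAt.comp x
    hf.hasFDerivAt
  exact h.differentiableAt

lemma fderiv_comp_proj {E : Type*} [NormedAddCommGroup E] [NormedSpace ℝ E]
    {f : E → (Fin 3 → ℝ)} {x : E} (hf : DifferentiableAt ℝ f x) (a : Fin 3) (v : E) :
    fderiv ℝ (fun y => f y a) x v = fderiv ℝ f x v a := by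
  have h := (ContinuousLinearMap.proj (R := ℝ) (φ := fun _ : Fin 3 => ℝ) a).hasFDerivAt.comp x
    hf.hasFDerivAt
  have h2 : HasFDerivAt (fun y => f y a) ((ContinuousLinearMap.proj a).comp (fderiv ℝ f x)) x := h
  rw [h2.fderiv]; rfl

lemma fderiv_sum_mul {E : Type*} [NormedAddCommGroup E] [NormedSpace ℝ E]
    {g h : Fin 3 → E → ℝ} {x : E}
    (hg : ∀ a, DifferentiableAt ℝ (g a) x) (hh : ∀ a, DifferentiableAt ℝ (h a) x) (v : E) :
    fderiv ℝ (fun y => ∑ a, g a y * h a y) x v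
      = ∑ a, (fderiv ℝ (g a) x v * h a x + g a x * fderiv ℝ (h a) x v) := by
  have H : HasFDerivAt (fun y => ∑ a, g a y * h a y)
      (∑ a, (g a x • fderiv ℝ (h a) x + h a x • fderiv ℝ (g a) x)) x := by
    refine HasFDerivAt.fun_sum (fun a _ => ?_)
    exact (hg a).hasFDerivAt.mul (hh a).hasFDerivAt
  rw [H.fderiv]
  simp only [ContinuousLinearMap.sum_apply, ContinuousLinearMap.add_apply,
    ContinuousLinearMap.smul_apply, smul_eq_mul]
  exact Finset.sum_congr rfl (fun a _ => by ring)

lemma diffsum_mul {E : Type*} [NormedAddCommGroup E] [NormedSpace ℝ E]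
    {g h : Fin 3 → E → ℝ} {x : E}
    (hg : ∀ a, DifferentiableAt ℝ (g a) x) (hh : ∀ a, DifferentiableAt ℝ (h a) x) :
    DifferentiableAt ℝ (fun y => ∑ a, g a y * h a y) x := by
  exact DifferentiableAt.fun_sum (fun a _ => (hg a).mul (hh a))


lemma pder_contDiffOn {s : Set (Fin 2 → ℝ)} (hs : IsOpen s) {n m : WithTop ℕ∞}
    {f : (Fin 2 → ℝ) → (Fin 3 → ℝ)} (hf : ContDiffOn ℝ n f s) (hmn : m + 1 ≤ n) (i : Fin 2) :
    ContDiffOn ℝ m (fun x => pder i f x) s :=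
  (hf.fderiv_of_isOpen hs hmn).clm_apply contDiffOn_const

lemma pder_comm {s : Set (Fin 2 → ℝ)} (hs : IsOpen s) {f : (Fin 2 → ℝ) → (Fin 3 → ℝ)}
    (hf : ContDiffOn ℝ 2 f s) {x : Fin 2 → ℝ} (hx : x ∈ s) (i j : Fin 2) :
    pder i (pder j f) x = pder j (pder i f) x := by
  have hev : ∀ᶠ y in nhds x, HasFDerivAt f (fderiv ℝ f y) y := by
    filter_upwards [hs.mem_nhds hx] with y hy
    exact ((hf.contDiffAt (hs.mem_nhds hy)).differentiableAt (by norm_num)).hasFDerivAt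
  have hf1 : ContDiffOn ℝ 1 (fun y => fderiv ℝ f y) s :=
    hf.fderiv_of_isOpen hs (by norm_num)
  have hd : DifferentiableAt ℝ (fun y => fderiv ℝ f y) x :=
    (hf1.contDiffAt (hs.mem_nhds hx)).differentiableAt one_ne_zero
  have hsym := second_derivative_symmetric_of_eventually hev hd.hasFDerivAt
    (Pi.single i 1) (Pi.single j 1)
  have h2 : ∀ (w v : Fin 2 → ℝ), fderiv ℝ (fun y => fderiv ℝ f y w) x v
      = fderiv ℝ (fun y => fderiv ℝ f y) x v w := by
    intro w v
    have h : HasFDerivAt (fun y => fderiv ℝ f y w)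
        ((ContinuousLinearMap.apply ℝ (Fin 3 → ℝ) w).comp
          (fderiv ℝ (fun y => fderiv ℝ f y) x)) x :=
      (ContinuousLinearMap.apply ℝ (Fin 3 → ℝ) w).hasFDerivAt.comp x hd.hasFDerivAt
    rw [h.fderiv]; rfl
  unfold pder
  rw [h2, h2]
  exact hsym

lemma det3_contDiffOn {s : Set (Fin 2 → ℝ)} {M : (Fin 2 → ℝ) → Matrix (Fin 3) (Fin 3) ℝ}
    (hM : ∀ a b, ContDiffOn ℝ (⊤ : ℕ∞) (fun x => M x a b) s) :
    ContDiffOn ℝ (⊤ : ℕ∞) (fun x => (M x).det) s := by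
  have h : (fun x => (M x).det) = fun x =>
      M x 0 0 * M x 1 1 * M x 2 2 - M x 0 0 * M x 1 2 * M x 2 1 - M x 0 1 * M x 1 0 * M x 2 2
        + M x 0 1 * M x 1 2 * M x 2 0 + M x 0 2 * M x 1 0 * M x 2 1
        - M x 0 2 * M x 1 1 * M x 2 0 := by
    funext x; exact Matrix.det_fin_three (M x)
  rw [h]
  exact (((((((hM 0 0).mul (hM 1 1)).mul (hM 2 2)).sub
    (((hM 0 0).mul (hM 1 2)).mul (hM 2 1))).sub
    (((hM 0 1).mul (hM 1 0)).mul (hM 2 2))).add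
    (((hM 0 1).mul (hM 1 2)).mul (hM 2 0))).add
    (((hM 0 2).mul (hM 1 0)).mul (hM 2 1))).sub
    (((hM 0 2).mul (hM 1 1)).mul (hM 2 0))

lemma inv_entry_contDiffOn {s : Set (Fin 2 → ℝ)} {M : (Fin 2 → ℝ) → Matrix (Fin 3) (Fin 3) ℝ}
    (hM : ∀ a b, ContDiffOn ℝ (⊤ : ℕ∞) (fun x => M x a b) s) (hdet : ∀ x ∈ s, (M x).det ≠ 0)
    (a b : Fin 3) : ContDiffOn ℝ (⊤ : ℕ∞) (fun x => (M x)⁻¹ a b) s := by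
  have hadj : ContDiffOn ℝ (⊤ : ℕ∞) (fun x => (M x).adjugate a b) s := by
    have h : (fun x => (M x).adjugate a b)
        = fun x => ((M x).updateRow b (Pi.single a 1)).det := by
      funext x; exact Matrix.adjugate_apply _ a b
    rw [h]
    refine det3_contDiffOn (fun c d => ?_)
    by_cases hcb : c = b
    · subst hcb
      simp only [Matrix.updateRow_self]
      exact contDiffOn_const
    · simp only [Matrix.updateRow_ne hcb]
      exact hM c d
  have h : (fun x => (M x)⁻¹ a b) = fun x => ((M x).det)⁻¹ * (M x).adjugate a b := by
    funext x
    rw [Matrix.inv_def]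
    simp [Ring.inverse_eq_inv', Matrix.smul_apply, smul_eq_mul]
  rw [h]
  exact ((det3_contDiffOn hM).inv hdet).mul hadj


lemma comp_proj_contDiffOn {s : Set (Fin 2 → ℝ)} {n : WithTop ℕ∞}
    {f : (Fin 2 → ℝ) → (Fin 3 → ℝ)} (hf : ContDiffOn ℝ n f s) (a : Fin 3) :
    ContDiffOn ℝ n (fun x => f x a) s := by
  have h := (ContinuousLinearMap.proj (R := ℝ) (φ := fun _ : Fin 3 => ℝ) a).contDiff.comp_contDiffOn hf
  exact h

lemma diffAt_of_contDiffOn {E F : Type*} [NormedAddCommGroup E] [NormedSpace ℝ E]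
    [NormedAddCommGroup F] [NormedSpace ℝ F] {s : Set E} {n : WithTop ℕ∞} {f : E → F}
    (hn : 1 ≤ n) (hf : ContDiffOn ℝ n f s) (hs : IsOpen s) {x : E} (hx : x ∈ s) :
    DifferentiableAt ℝ f x :=
  (hf.contDiffAt (hs.mem_nhds hx)).differentiableAt (lt_of_lt_of_le zero_lt_one hn).ne'

lemma clm_eq_zero {F : Type*} [NormedAddCommGroup F] [NormedSpace ℝ F]
    {L : (Fin 2 → ℝ) →L[ℝ] F} (h : ∀ k : Fin 2, L (Pi.single k 1) = 0) : L = 0 := by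
  apply ContinuousLinearMap.coe_injective
  apply (Pi.basisFun ℝ (Fin 2)).ext
  intro i
  simpa [Pi.basisFun_apply] using h i


lemma deriv_of_vanishing_two_sums {s : Set (Fin 2 → ℝ)} (hs : IsOpen s)
    {x : Fin 2 → ℝ} (hx : x ∈ s)
    {g1 h1 g2 h2 : Fin 3 → (Fin 2 → ℝ) → ℝ}
    (hg1 : ∀ a, DifferentiableAt ℝ (g1 a) x) (hh1 : ∀ a, DifferentiableAt ℝ (h1 a) x)
    (hg2 : ∀ a, DifferentiableAt ℝ (g2 a) x) (hh2 : ∀ a, DifferentiableAt ℝ (h2 a) x)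
    (hvan : ∀ y ∈ s, (∑ a, g1 a y * h1 a y) + (∑ a, g2 a y * h2 a y) = 0) (v : Fin 2 → ℝ) :
    (∑ a, (fderiv ℝ (g1 a) x v * h1 a x + g1 a x * fderiv ℝ (h1 a) x v))
      + (∑ a, (fderiv ℝ (g2 a) x v * h2 a x + g2 a x * fderiv ℝ (h2 a) x v)) = 0 := by
  have hd1 : DifferentiableAt ℝ (fun y => ∑ a, g1 a y * h1 a y) x := diffsum_mul hg1 hh1
  have hd2 : DifferentiableAt ℝ (fun y => ∑ a, g2 a y * h2 a y) x := diffsum_mul hg2 hh2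
  have hev : (fun y => (∑ a, g1 a y * h1 a y) + (∑ a, g2 a y * h2 a y))
      =ᶠ[nhds x] (fun _ => (0 : ℝ)) := by
    filter_upwards [hs.mem_nhds hx] with y hy using hvan y hy
  have h0 : fderiv ℝ (fun y => (∑ a, g1 a y * h1 a y) + (∑ a, g2 a y * h2 a y)) x = 0 := by
    rw [hev.fderiv_eq]
    exact fderiv_const_apply 0
  have h1' := congrArg (fun L : (Fin 2 → ℝ) →L[ℝ] ℝ => L v) h0
  rw [fderiv_fun_add hd1 hd2] at h1'
  rw [ContinuousLinearMap.add_apply] at h1'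
  rw [fderiv_sum_mul hg1 hh1 v, fderiv_sum_mul hg2 hh2 v] at h1'
  simpa using h1'

lemma d3 {D : Fin 2 → Fin 2 → Fin 2 → ℝ} (hsym : ∀ i j k, D i j k = D i k j)
    (hanti : ∀ i j k, D i j k + D j i k = 0) : ∀ i j k, D i j k = 0 := by
  have h1 : ∀ i k, D i i k = 0 := fun i k => by have := hanti i i k; linarith
  intro i j k
  rcases eq_or_ne i j with rfl | hij
  · exact h1 i k
  rcases eq_or_ne j k with rfl | hjk
  · have h2 := hanti i j j
    have h3 := hsym j i j
    have h4 := h1 j i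
    linarith
  · have hik : i = k := by
      fin_cases i <;> fin_cases j <;> fin_cases k <;> first | rfl | (exfalso; exact hij rfl) | (exfalso; exact hjk rfl)
    subst hik
    rw [hsym i j i]
    exact h1 i j

end AuxIK

/-- If `V` is an infinitesimal isometry on `y₀(ω)` (`((∇y₀)ᵀ∇V)_sym = 0`), `p` is
defined by `p = −Q₀^{−T}((∇V)ᵀb₀, 0)ᵀ`, and `(∇y₀)ᵀ∇p + (∇V)ᵀ∇b₀ = 0` on `ω`,
then `S = [∇V, p]Q₀⁻¹` is skew-symmetric and constant on `ω`, and consequently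
`V = S·y₀ + c` for a fixed `S ∈ so(3)` and a constant vector `c ∈ ℝ³`. -/
theorem infinitesimal_isometry_kernel
    (ω : Set (Fin 2 → ℝ)) (hω : IsOpen ω) (hconn : IsConnected ω)
    (y0 b0 : (Fin 2 → ℝ) → (Fin 3 → ℝ))
    (hy0 : ContDiffOn ℝ (⊤ : ℕ∞) y0 ω) (hb0 : ContDiffOn ℝ (⊤ : ℕ∞) b0 ω)
    (hli : ∀ x ∈ ω, LinearIndependent ℝ ![pder 0 y0 x, pder 1 y0 x])
    (hinv : ∀ x ∈ ω, (Q0mat y0 b0 x).det ≠ 0)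
    (V : (Fin 2 → ℝ) → (Fin 3 → ℝ)) (hV : ContDiffOn ℝ 2 V ω)
    (hiso : ∀ x ∈ ω, ∀ i j : Fin 2,
      (∑ a, pder i y0 x a * pder j V x a) + (∑ a, pder j y0 x a * pder i V x a) = 0)
    (p : (Fin 2 → ℝ) → (Fin 3 → ℝ))
    (hp : ∀ x ∈ ω, p x =
      -(((Q0mat y0 b0 x)ᵀ)⁻¹.mulVec
        ![∑ a, pder 0 V x a * b0 x a, ∑ a, pder 1 V x a * b0 x a, 0]))
    (hbend : ∀ x ∈ ω, ∀ i j : Fin 2,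
      (∑ a, pder i y0 x a * pder j p x a) + (∑ a, pder i V x a * pder j b0 x a) = 0) :
    ∃ S : Matrix (Fin 3) (Fin 3) ℝ, Sᵀ = -S ∧
      ∃ c : Fin 3 → ℝ,
        (∀ x ∈ ω, colsVp V p x * (Q0mat y0 b0 x)⁻¹ = S) ∧
        (∀ x ∈ ω, V x = S.mulVec (y0 x) + c) := by
  classical
  obtain ⟨x₀, hx₀⟩ := hconn.nonempty
  have hpc : IsPreconnected ω := hconn.isPreconnected
  have hu : ∀ x ∈ ω, IsUnit (Q0mat y0 b0 x).det := fun x hx => isUnit_iff_ne_zero.mpr (hinv x hx)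
  have huT : ∀ x ∈ ω, IsUnit ((Q0mat y0 b0 x)ᵀ).det := fun x hx => by
    rw [Matrix.det_transpose]; exact hu x hx
  have hY : ∀ i : Fin 2, ContDiffOn ℝ (⊤ : ℕ∞) (fun x => pder i y0 x) ω :=
    fun i => AuxIK.pder_contDiffOn hω hy0 (by simp) i
  have hVd : ∀ i : Fin 2, ContDiffOn ℝ 1 (fun x => pder i V x) ω :=
    fun i => AuxIK.pder_contDiffOn hω hV (by norm_num) i
  have hYdA : ∀ (i : Fin 2), ∀ x ∈ ω, DifferentiableAt ℝ (fun y => pder i y0 y) x :=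
    fun i x hx => AuxIK.diffAt_of_contDiffOn (by simp) (hY i) hω hx
  have hVdA : ∀ (i : Fin 2), ∀ x ∈ ω, DifferentiableAt ℝ (fun y => pder i V y) x :=
    fun i x hx => AuxIK.diffAt_of_contDiffOn le_rfl (hVd i) hω hx
  have hbdA : ∀ x ∈ ω, DifferentiableAt ℝ b0 x :=
    fun x hx => AuxIK.diffAt_of_contDiffOn (by simp) hb0 hω hx
  have hy0dA : ∀ x ∈ ω, DifferentiableAt ℝ y0 x :=
    fun x hx => AuxIK.diffAt_of_contDiffOn (by simp) hy0 hω hx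
  have hVfdA : ∀ x ∈ ω, DifferentiableAt ℝ V x :=
    fun x hx => AuxIK.diffAt_of_contDiffOn (by norm_num) hV hω hx
  have hQe : ∀ a b : Fin 3, ContDiffOn ℝ (⊤ : ℕ∞) (fun x => Q0mat y0 b0 x a b) ω := by
    intro a b
    fin_cases b
    · exact AuxIK.comp_proj_contDiffOn (hY 0) a
    · exact AuxIK.comp_proj_contDiffOn (hY 1) a
    · exact AuxIK.comp_proj_contDiffOn hb0 a
  have hQinv : ∀ a b : Fin 3, ContDiffOn ℝ (⊤ : ℕ∞) (fun x => (Q0mat y0 b0 x)⁻¹ a b) ω :=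
    AuxIK.inv_entry_contDiffOn hQe hinv
  have hQinvdA : ∀ a b : Fin 3, ∀ x ∈ ω, DifferentiableAt ℝ (fun y => (Q0mat y0 b0 y)⁻¹ a b) x :=
    fun a b x hx => AuxIK.diffAt_of_contDiffOn (by simp) (hQinv a b) hω hx
  have hpdA : ∀ x ∈ ω, DifferentiableAt ℝ p x := by
    intro x hx
    have hvv : ∀ b : Fin 3, DifferentiableAt ℝ
        (fun y => ![∑ a, pder 0 V y a * b0 y a, ∑ a, pder 1 V y a * b0 y a, (0:ℝ)] b) x := by
      intro b
      fin_cases b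
      · simp only [Matrix.cons_val_zero]
        exact AuxIK.diffsum_mul (fun a => AuxIK.comp_proj_diff (hVdA 0 x hx) a)
          (fun a => AuxIK.comp_proj_diff (hbdA x hx) a)
      · simp only [Matrix.cons_val_one, Matrix.head_cons]
        exact AuxIK.diffsum_mul (fun a => AuxIK.comp_proj_diff (hVdA 1 x hx) a)
          (fun a => AuxIK.comp_proj_diff (hbdA x hx) a)
      · simp only [Matrix.cons_val_two, Matrix.tail_cons, Matrix.head_cons]
        exact differentiableAt_const 0
    have hform : DifferentiableAt ℝ (fun y =>
        -(((Q0mat y0 b0 y)ᵀ)⁻¹.mulVec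
          ![∑ a, pder 0 V y a * b0 y a, ∑ a, pder 1 V y a * b0 y a, 0])) x := by
      apply DifferentiableAt.neg
      rw [differentiableAt_pi]
      intro a
      have heq : (fun y => (((Q0mat y0 b0 y)ᵀ)⁻¹.mulVec
            ![∑ a, pder 0 V y a * b0 y a, ∑ a, pder 1 V y a * b0 y a, 0]) a)
          = fun y => ∑ b, (Q0mat y0 b0 y)⁻¹ b a
              * (![∑ a, pder 0 V y a * b0 y a, ∑ a, pder 1 V y a * b0 y a, (0:ℝ)] b) := by
        funext y
        rw [← Matrix.transpose_nonsing_inv]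
        simp [Matrix.mulVec, dotProduct, Matrix.transpose_apply, Fin.sum_univ_succ]
      rw [heq]
      exact DifferentiableAt.fun_sum fun b _ => (hQinvdA b a x hx).mul (hvv b)
    have hloc : p =ᶠ[nhds x] (fun y =>
        -(((Q0mat y0 b0 y)ᵀ)⁻¹.mulVec
          ![∑ a, pder 0 V y a * b0 y a, ∑ a, pder 1 V y a * b0 y a, 0])) := by
      filter_upwards [hω.mem_nhds hx] with y hy using hp y hy
    exact hloc.differentiableAt_iff.mpr hform
  have hpadA : ∀ (a : Fin 3), ∀ x ∈ ω, DifferentiableAt ℝ (fun y => p y a) x :=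
    fun a x hx => AuxIK.comp_proj_diff (hpdA x hx) a
  have hrow : ∀ x ∈ ω, ∀ i : Fin 3,
      ∑ a, Q0mat y0 b0 x a i * p x a
        = -(![∑ a, pder 0 V x a * b0 x a, ∑ a, pder 1 V x a * b0 x a, 0] i) := by
    intro x hx i
    have h2 : (Q0mat y0 b0 x)ᵀ.mulVec (p x)
        = -(![∑ a, pder 0 V x a * b0 x a, ∑ a, pder 1 V x a * b0 x a, 0]) := by
      rw [hp x hx, Matrix.mulVec_neg, Matrix.mulVec_mulVec,
        Matrix.mul_nonsing_inv _ (huT x hx), Matrix.one_mulVec]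
    have h3 := congrFun h2 i
    simpa [Matrix.mulVec, dotProduct, Matrix.transpose_apply] using h3
  have hr0 : ∀ x ∈ ω, (∑ a, pder 0 y0 x a * p x a) = -(∑ a, pder 0 V x a * b0 x a) := by
    intro x hx
    have := hrow x hx 0
    simpa [Q0mat] using this
  have hr1 : ∀ x ∈ ω, (∑ a, pder 1 y0 x a * p x a) = -(∑ a, pder 1 V x a * b0 x a) := by
    intro x hx
    have := hrow x hx 1
    simpa [Q0mat] using this
  have hr2 : ∀ x ∈ ω, (∑ a, b0 x a * p x a) = 0 := by
    intro x hx
    have := hrow x hx 2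
    simpa [Q0mat] using this
  have hcomm : ∀ (f g : Fin 3 → ℝ), ∑ a, f a * g a = ∑ a, g a * f a :=
    fun f g => Finset.sum_congr rfl fun a _ => mul_comm _ _
  have hMskew : ∀ x ∈ ω, (Q0mat y0 b0 x)ᵀ * colsVp V p x
      + ((Q0mat y0 b0 x)ᵀ * colsVp V p x)ᵀ = 0 := by
    intro x hx
    ext i j
    simp only [Matrix.add_apply, Matrix.transpose_apply, Matrix.mul_apply, Matrix.zero_apply]
    fin_cases i <;> fin_cases j <;>
      simp only [Q0mat, colsVp, Matrix.of_apply] <;> norm_num [Fin.ext_iff]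
    · linarith [hiso x hx 0 0]
    · linarith [hiso x hx 0 1]
    · linarith [hr0 x hx, hcomm (b0 x) (pder 0 V x)]
    · linarith [hiso x hx 1 0]
    · linarith [hiso x hx 1 1]
    · linarith [hr1 x hx, hcomm (b0 x) (pder 1 V x)]
    · linarith [hr0 x hx, hcomm (b0 x) (pder 0 V x)]
    · linarith [hr1 x hx, hcomm (b0 x) (pder 1 V x)]
    · linarith [hr2 x hx]
  have hSQ : ∀ x ∈ ω,
      colsVp V p x * (Q0mat y0 b0 x)⁻¹ * Q0mat y0 b0 x = colsVp V p x := by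
    intro x hx
    rw [Matrix.mul_assoc, Matrix.nonsing_inv_mul _ (hu x hx), Matrix.mul_one]
  have hskew : ∀ x ∈ ω, (colsVp V p x * (Q0mat y0 b0 x)⁻¹)ᵀ
      = -(colsVp V p x * (Q0mat y0 b0 x)⁻¹) := by
    intro x hx
    have h := hMskew x hx
    have hC := hSQ x hx
    have e2 : (Q0mat y0 b0 x)ᵀ * ((colsVp V p x * (Q0mat y0 b0 x)⁻¹)ᵀ * Q0mat y0 b0 x)
        = ((Q0mat y0 b0 x)ᵀ * colsVp V p x)ᵀ := by
      rw [Matrix.transpose_mul ((Q0mat y0 b0 x)ᵀ) (colsVp V p x), Matrix.transpose_transpose]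
      conv_rhs => rw [← hC]
      rw [Matrix.transpose_mul (colsVp V p x * (Q0mat y0 b0 x)⁻¹) (Q0mat y0 b0 x)]
      rw [Matrix.mul_assoc]
    have h1 : (Q0mat y0 b0 x)ᵀ
        * ((colsVp V p x * (Q0mat y0 b0 x)⁻¹
            + (colsVp V p x * (Q0mat y0 b0 x)⁻¹)ᵀ) * Q0mat y0 b0 x) = 0 := by
      rw [Matrix.add_mul, Matrix.mul_add, e2, hC]
      exact h
    have h2 : (colsVp V p x * (Q0mat y0 b0 x)⁻¹
        + (colsVp V p x * (Q0mat y0 b0 x)⁻¹)ᵀ) * Q0mat y0 b0 x = 0 := by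
      have h5 := congrArg (fun M => ((Q0mat y0 b0 x)ᵀ)⁻¹ * M) h1
      simpa [Matrix.nonsing_inv_mul_cancel_left _ _ (huT x hx)] using h5
    have h3 : colsVp V p x * (Q0mat y0 b0 x)⁻¹
        + (colsVp V p x * (Q0mat y0 b0 x)⁻¹)ᵀ = 0 := by
      have h6 := congrArg (fun M => M * (Q0mat y0 b0 x)⁻¹) h2
      simpa [Matrix.mul_assoc, Matrix.mul_nonsing_inv _ (hu x hx)] using h6
    exact eq_neg_of_add_eq_zero_right h3
  have hQTS : ∀ x ∈ ω, (Q0mat y0 b0 x)ᵀ * (colsVp V p x * (Q0mat y0 b0 x)⁻¹)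
      = -(colsVp V p x)ᵀ := by
    intro x hx
    have h1 : (Q0mat y0 b0 x)ᵀ * (colsVp V p x * (Q0mat y0 b0 x)⁻¹)
        = ((colsVp V p x * (Q0mat y0 b0 x)⁻¹)ᵀ * Q0mat y0 b0 x)ᵀ := by
      rw [Matrix.transpose_mul, Matrix.transpose_transpose]
    rw [h1, hskew x hx, Matrix.neg_mul, Matrix.transpose_neg, hSQ x hx]
  have hCdA : ∀ (a c : Fin 3), ∀ x ∈ ω, DifferentiableAt ℝ (fun y => colsVp V p y a c) x := by
    intro a c x hx
    fin_cases c
    · exact AuxIK.comp_proj_diff (hVdA 0 x hx) a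
    · exact AuxIK.comp_proj_diff (hVdA 1 x hx) a
    · exact hpadA a x hx
  have hsdA : ∀ (a b : Fin 3), ∀ x ∈ ω,
      DifferentiableAt ℝ (fun y => ∑ c, colsVp V p y a c * (Q0mat y0 b0 y)⁻¹ c b) x :=
    fun a b x hx => AuxIK.diffsum_mul (fun c => hCdA a c x hx) (fun c => hQinvdA c b x hx)
  have hy0c2 : ContDiffOn ℝ 2 y0 ω := hy0.of_le (WithTop.coe_le_coe.mpr (le_top : (2:ℕ∞) ≤ ⊤))
  have hanti : ∀ x ∈ ω, ∀ i j k : Fin 2,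
      ((∑ a, pder i y0 x a * pder k (pder j V) x a)
        + (∑ a, pder i V x a * pder k (pder j y0) x a))
      + ((∑ a, pder j y0 x a * pder k (pder i V) x a)
        + (∑ a, pder j V x a * pder k (pder i y0) x a)) = 0 := by
    intro x hx i j k
    have H := AuxIK.deriv_of_vanishing_two_sums hω hx
      (g1 := fun a y => pder i y0 y a) (h1 := fun a y => pder j V y a)
      (g2 := fun a y => pder j y0 y a) (h2 := fun a y => pder i V y a)
      (fun a => AuxIK.comp_proj_diff (hYdA i x hx) a)
      (fun a => AuxIK.comp_proj_diff (hVdA j x hx) a)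
      (fun a => AuxIK.comp_proj_diff (hYdA j x hx) a)
      (fun a => AuxIK.comp_proj_diff (hVdA i x hx) a)
      (fun y hy => hiso y hy i j) (Pi.single k 1)
    simp only [AuxIK.fderiv_comp_proj (hYdA i x hx), AuxIK.fderiv_comp_proj (hVdA j x hx),
      AuxIK.fderiv_comp_proj (hYdA j x hx), AuxIK.fderiv_comp_proj (hVdA i x hx),
      Finset.sum_add_distrib] at H
    have e1 : (∑ a, fderiv ℝ (fun y => pder i y0 y) x (Pi.single k 1) a * pder j V x a)
        = ∑ a, pder j V x a * fderiv ℝ (fun y => pder i y0 y) x (Pi.single k 1) a :=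
      Finset.sum_congr rfl fun a _ => mul_comm _ _
    have e2 : (∑ a, fderiv ℝ (fun y => pder j y0 y) x (Pi.single k 1) a * pder i V x a)
        = ∑ a, pder i V x a * fderiv ℝ (fun y => pder j y0 y) x (Pi.single k 1) a :=
      Finset.sum_congr rfl fun a _ => mul_comm _ _
    show ((∑ a, pder i y0 x a * fderiv ℝ (fun y => pder j V y) x (Pi.single k 1) a)
        + (∑ a, pder i V x a * fderiv ℝ (fun y => pder j y0 y) x (Pi.single k 1) a))
      + ((∑ a, pder j y0 x a * fderiv ℝ (fun y => pder i V y) x (Pi.single k 1) a)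
        + (∑ a, pder j V x a * fderiv ℝ (fun y => pder i y0 y) x (Pi.single k 1) a)) = 0
    linarith [H, e1, e2]
  have hsymD : ∀ x ∈ ω, ∀ i j k : Fin 2,
      (∑ a, pder i y0 x a * pder k (pder j V) x a)
        + (∑ a, pder i V x a * pder k (pder j y0) x a)
      = (∑ a, pder i y0 x a * pder j (pder k V) x a)
        + (∑ a, pder i V x a * pder j (pder k y0) x a) := by
    intro x hx i j k
    rw [AuxIK.pder_comm hω hV hx k j, AuxIK.pder_comm hω hy0c2 hx k j]
  have hDzero : ∀ x ∈ ω, ∀ i j k : Fin 2,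
      (∑ a, pder i y0 x a * pder k (pder j V) x a)
        + (∑ a, pder i V x a * pder k (pder j y0) x a) = 0 := by
    intro x hx
    exact AuxIK.d3
      (D := fun i j k => (∑ a, pder i y0 x a * pder k (pder j V) x a)
        + (∑ a, pder i V x a * pder k (pder j y0) x a))
      (fun i j k => hsymD x hx i j k) (fun i j k => hanti x hx i j k)
  have hG : ∀ y ∈ ω, ∀ j : Fin 2,
      (∑ a, pder j y0 y a * p y a) + (∑ a, pder j V y a * b0 y a) = 0 := by
    intro y hy j
    fin_cases j
    · show (∑ a, pder 0 y0 y a * p y a) + (∑ a, pder 0 V y a * b0 y a) = 0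
      have := hr0 y hy; linarith
    · show (∑ a, pder 1 y0 y a * p y a) + (∑ a, pder 1 V y a * b0 y a) = 0
      have := hr1 y hy; linarith
  have hE3 : ∀ x ∈ ω, ∀ j k : Fin 2,
      (∑ a, b0 x a * pder k (pder j V) x a) + (∑ a, p x a * pder k (pder j y0) x a) = 0 := by
    intro x hx j k
    have H := AuxIK.deriv_of_vanishing_two_sums hω hx
      (g1 := fun a y => pder j y0 y a) (h1 := fun a y => p y a)
      (g2 := fun a y => pder j V y a) (h2 := fun a y => b0 y a)
      (fun a => AuxIK.comp_proj_diff (hYdA j x hx) a)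
      (fun a => AuxIK.comp_proj_diff (hpdA x hx) a)
      (fun a => AuxIK.comp_proj_diff (hVdA j x hx) a)
      (fun a => AuxIK.comp_proj_diff (hbdA x hx) a)
      (fun y hy => hG y hy j) (Pi.single k 1)
    simp only [AuxIK.fderiv_comp_proj (hYdA j x hx), AuxIK.fderiv_comp_proj (hpdA x hx),
      AuxIK.fderiv_comp_proj (hVdA j x hx), AuxIK.fderiv_comp_proj (hbdA x hx),
      Finset.sum_add_distrib] at H
    have hb' : (∑ a, pder j y0 x a * fderiv ℝ p x (Pi.single k 1) a)
        + (∑ a, pder j V x a * fderiv ℝ b0 x (Pi.single k 1) a) = 0 := hbend x hx j k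
    have e3 : (∑ a, fderiv ℝ (fun y => pder j V y) x (Pi.single k 1) a * b0 x a)
        = ∑ a, b0 x a * fderiv ℝ (fun y => pder j V y) x (Pi.single k 1) a :=
      Finset.sum_congr rfl fun a _ => mul_comm _ _
    have e4 : (∑ a, fderiv ℝ (fun y => pder j y0 y) x (Pi.single k 1) a * p x a)
        = ∑ a, p x a * fderiv ℝ (fun y => pder j y0 y) x (Pi.single k 1) a :=
      Finset.sum_congr rfl fun a _ => mul_comm _ _
    show (∑ a, b0 x a * fderiv ℝ (fun y => pder j V y) x (Pi.single k 1) a)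
        + (∑ a, p x a * fderiv ℝ (fun y => pder j y0 y) x (Pi.single k 1) a) = 0
    linarith [H, hb', e3, e4]
  have hE4 : ∀ x ∈ ω, ∀ k : Fin 2,
      (∑ a, b0 x a * fderiv ℝ p x (Pi.single k 1) a)
        + (∑ a, p x a * fderiv ℝ b0 x (Pi.single k 1) a) = 0 := by
    intro x hx k
    have H := AuxIK.deriv_of_vanishing_two_sums hω hx
      (g1 := fun a y => b0 y a) (h1 := fun a y => p y a)
      (g2 := fun _ _ => (0:ℝ)) (h2 := fun _ _ => (0:ℝ))
      (fun a => AuxIK.comp_proj_diff (hbdA x hx) a)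
      (fun a => AuxIK.comp_proj_diff (hpdA x hx) a)
      (fun _ => differentiableAt_const 0) (fun _ => differentiableAt_const 0)
      (fun y hy => by simpa using hr2 y hy) (Pi.single k 1)
    simp only [AuxIK.fderiv_comp_proj (hbdA x hx), AuxIK.fderiv_comp_proj (hpdA x hx),
      fderiv_const, Pi.zero_apply, ContinuousLinearMap.zero_apply, mul_zero, zero_mul,
      add_zero, Finset.sum_const_zero, Finset.sum_add_distrib] at H
    have e3 : (∑ a, fderiv ℝ b0 x (Pi.single k 1) a * p x a)
        = ∑ a, p x a * fderiv ℝ b0 x (Pi.single k 1) a :=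
      Finset.sum_congr rfl fun a _ => mul_comm _ _
    linarith [H, e3]
  have eQ0 : ∀ (y : Fin 2 → ℝ) (c : Fin 3), Q0mat y0 b0 y c 0 = pder 0 y0 y c := fun y c => rfl
  have eQ1 : ∀ (y : Fin 2 → ℝ) (c : Fin 3), Q0mat y0 b0 y c 1 = pder 1 y0 y c := fun y c => rfl
  have eQ2 : ∀ (y : Fin 2 → ℝ) (c : Fin 3), Q0mat y0 b0 y c 2 = b0 y c := fun y c => rfl
  have eC0 : ∀ (y : Fin 2 → ℝ) (c : Fin 3), colsVp V p y c 0 = pder 0 V y c := fun y c => rfl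
  have eC1 : ∀ (y : Fin 2 → ℝ) (c : Fin 3), colsVp V p y c 1 = pder 1 V y c := fun y c => rfl
  have eC2 : ∀ (y : Fin 2 → ℝ) (c : Fin 3), colsVp V p y c 2 = p y c := fun y c => rfl
  have hA0 : ∀ x ∈ ω, ∀ k : Fin 2, ∀ a b : Fin 3,
      fderiv ℝ (fun y => ∑ c, colsVp V p y a c * (Q0mat y0 b0 y)⁻¹ c b) x (Pi.single k 1)
        = 0 := by
    intro x hx k
    set A : Matrix (Fin 3) (Fin 3) ℝ := Matrix.of fun a c =>
      fderiv ℝ (fun y => ∑ e, colsVp V p y a e * (Q0mat y0 b0 y)⁻¹ e c) x (Pi.single k 1)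
      with hA
    suffices hAz : A = 0 by
      intro a b
      have h := congrFun (congrFun hAz a) b
      simpa [hA] using h
    have key : ∀ (u w : (Fin 2 → ℝ) → Fin 3 → ℝ),
        DifferentiableAt ℝ u x → DifferentiableAt ℝ w x →
        (∀ y ∈ ω, ∀ a : Fin 3,
          ∑ c, (∑ e, colsVp V p y a e * (Q0mat y0 b0 y)⁻¹ e c) * u y c = w y a) →
        ∀ a : Fin 3,
          (∑ c, A a c * u x c)
            + (∑ c, (∑ e, colsVp V p x a e * (Q0mat y0 b0 x)⁻¹ e c)
                * fderiv ℝ u x (Pi.single k 1) c)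
          = fderiv ℝ w x (Pi.single k 1) a := by
      intro u w hu hw hcol a
      have hev : (fun y => ∑ c, (∑ e, colsVp V p y a e * (Q0mat y0 b0 y)⁻¹ e c) * u y c)
          =ᶠ[nhds x] (fun y => w y a) := by
        filter_upwards [hω.mem_nhds hx] with y hy using hcol y hy a
      have hg : ∀ c : Fin 3, DifferentiableAt ℝ
          (fun y => ∑ e, colsVp V p y a e * (Q0mat y0 b0 y)⁻¹ e c) x := fun c => hsdA a c x hx
      have hh : ∀ c : Fin 3, DifferentiableAt ℝ (fun y => u y c) x :=
        fun c => AuxIK.comp_proj_diff hu c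
      have h1 : fderiv ℝ
            (fun y => ∑ c, (∑ e, colsVp V p y a e * (Q0mat y0 b0 y)⁻¹ e c) * u y c) x
            (Pi.single k 1)
          = ∑ c, (fderiv ℝ (fun y => ∑ e, colsVp V p y a e * (Q0mat y0 b0 y)⁻¹ e c) x
                (Pi.single k 1) * u x c
              + (∑ e, colsVp V p x a e * (Q0mat y0 b0 x)⁻¹ e c)
                * fderiv ℝ (fun y => u y c) x (Pi.single k 1)) :=
        AuxIK.fderiv_sum_mul hg hh _
      have h2 : fderiv ℝ
            (fun y => ∑ c, (∑ e, colsVp V p y a e * (Q0mat y0 b0 y)⁻¹ e c) * u y c) x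
          = fderiv ℝ (fun y => w y a) x := hev.fderiv_eq
      have h3 : fderiv ℝ (fun y => w y a) x (Pi.single k 1)
          = fderiv ℝ w x (Pi.single k 1) a := AuxIK.fderiv_comp_proj hw a _
      have h4 : ∀ c : Fin 3, fderiv ℝ (fun y => u y c) x (Pi.single k 1)
          = fderiv ℝ u x (Pi.single k 1) c := fun c => AuxIK.fderiv_comp_proj hu c _
      calc (∑ c, A a c * u x c)
            + (∑ c, (∑ e, colsVp V p x a e * (Q0mat y0 b0 x)⁻¹ e c)
                * fderiv ℝ u x (Pi.single k 1) c)
          = ∑ c, (A a c * u x c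
              + (∑ e, colsVp V p x a e * (Q0mat y0 b0 x)⁻¹ e c)
                * fderiv ℝ u x (Pi.single k 1) c) := Finset.sum_add_distrib.symm
        _ = ∑ c, (A a c * u x c
              + (∑ e, colsVp V p x a e * (Q0mat y0 b0 x)⁻¹ e c)
                * fderiv ℝ (fun y => u y c) x (Pi.single k 1)) :=
            Finset.sum_congr rfl fun c _ => by rw [h4 c]
        _ = fderiv ℝ w x (Pi.single k 1) a := by rw [← h3, ← h2]; exact h1.symm
    have hcol : ∀ (j : Fin 3), ∀ y ∈ ω, ∀ a : Fin 3,
        ∑ c, (∑ e, colsVp V p y a e * (Q0mat y0 b0 y)⁻¹ e c) * Q0mat y0 b0 y c j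
          = colsVp V p y a j := by
      intro j y hy a
      have h := congrFun (congrFun (hSQ y hy) a) j
      rw [← h, Matrix.mul_apply]
      exact Finset.sum_congr rfl fun c _ => by rw [Matrix.mul_apply]
    have hcol0 : ∀ y ∈ ω, ∀ a : Fin 3,
        ∑ c, (∑ e, colsVp V p y a e * (Q0mat y0 b0 y)⁻¹ e c) * pder 0 y0 y c
          = pder 0 V y a := by
      intro y hy a
      have h := hcol 0 y hy a
      simp only [eQ0, eC0] at h
      exact h
    have hcol1 : ∀ y ∈ ω, ∀ a : Fin 3,
        ∑ c, (∑ e, colsVp V p y a e * (Q0mat y0 b0 y)⁻¹ e c) * pder 1 y0 y c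
          = pder 1 V y a := by
      intro y hy a
      have h := hcol 1 y hy a
      simp only [eQ1, eC1] at h
      exact h
    have hcol2 : ∀ y ∈ ω, ∀ a : Fin 3,
        ∑ c, (∑ e, colsVp V p y a e * (Q0mat y0 b0 y)⁻¹ e c) * b0 y c = p y a := by
      intro y hy a
      have h := hcol 2 y hy a
      simp only [eQ2, eC2] at h
      exact h
    have K0 := key (fun y => pder 0 y0 y) (fun y => pder 0 V y) (hYdA 0 x hx) (hVdA 0 x hx) hcol0
    have K1 := key (fun y => pder 1 y0 y) (fun y => pder 1 V y) (hYdA 1 x hx) (hVdA 1 x hx) hcol1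
    have K2 := key b0 p (hbdA x hx) (hpdA x hx) hcol2
    have hQS : ∀ (i c : Fin 3),
        (∑ a, Q0mat y0 b0 x a i * (∑ e, colsVp V p x a e * (Q0mat y0 b0 x)⁻¹ e c))
          = -(colsVp V p x c i) := by
      intro i c
      have h := congrFun (congrFun (hQTS x hx) i) c
      rw [Matrix.mul_apply] at h
      calc ∑ a, Q0mat y0 b0 x a i * (∑ e, colsVp V p x a e * (Q0mat y0 b0 x)⁻¹ e c)
          = ∑ a, (Q0mat y0 b0 x)ᵀ i a * (colsVp V p x * (Q0mat y0 b0 x)⁻¹) a c :=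
            Finset.sum_congr rfl fun e _ => by rw [Matrix.transpose_apply, Matrix.mul_apply]
        _ = -(colsVp V p x c i) := by rw [h]; simp [Matrix.neg_apply, Matrix.transpose_apply]
    have pair : ∀ (u w : (Fin 2 → ℝ) → Fin 3 → ℝ),
        (∀ a : Fin 3, (∑ c, A a c * u x c)
            + (∑ c, (∑ e, colsVp V p x a e * (Q0mat y0 b0 x)⁻¹ e c)
                * fderiv ℝ u x (Pi.single k 1) c)
          = fderiv ℝ w x (Pi.single k 1) a) →
        ∀ i : Fin 3, ∑ a, Q0mat y0 b0 x a i * (∑ c, A a c * u x c)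
          = (∑ a, Q0mat y0 b0 x a i * fderiv ℝ w x (Pi.single k 1) a)
            + (∑ c, colsVp V p x c i * fderiv ℝ u x (Pi.single k 1) c) := by
      intro u w K i
      have h1 : ∑ a, Q0mat y0 b0 x a i * (∑ c, A a c * u x c)
          = ∑ a, (Q0mat y0 b0 x a i * fderiv ℝ w x (Pi.single k 1) a
              - Q0mat y0 b0 x a i * (∑ c, (∑ e, colsVp V p x a e * (Q0mat y0 b0 x)⁻¹ e c)
                  * fderiv ℝ u x (Pi.single k 1) c)) := by
        refine Finset.sum_congr rfl fun a _ => ?_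
        have hKa := K a
        have : (∑ c, A a c * u x c) = fderiv ℝ w x (Pi.single k 1) a
            - ∑ c, (∑ e, colsVp V p x a e * (Q0mat y0 b0 x)⁻¹ e c)
                * fderiv ℝ u x (Pi.single k 1) c := by linarith
        rw [this, mul_sub]
      have h2 : ∑ a, Q0mat y0 b0 x a i
            * (∑ c, (∑ e, colsVp V p x a e * (Q0mat y0 b0 x)⁻¹ e c)
                * fderiv ℝ u x (Pi.single k 1) c)
          = ∑ c, -(colsVp V p x c i) * fderiv ℝ u x (Pi.single k 1) c := by
        calc ∑ a, Q0mat y0 b0 x a i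
              * (∑ c, (∑ e, colsVp V p x a e * (Q0mat y0 b0 x)⁻¹ e c)
                  * fderiv ℝ u x (Pi.single k 1) c)
            = ∑ a, ∑ c, Q0mat y0 b0 x a i * (∑ e, colsVp V p x a e * (Q0mat y0 b0 x)⁻¹ e c)
                * fderiv ℝ u x (Pi.single k 1) c := by
              refine Finset.sum_congr rfl fun a _ => ?_
              rw [Finset.mul_sum]
              exact Finset.sum_congr rfl fun c _ => (mul_assoc _ _ _).symm
          _ = ∑ c, ∑ a, Q0mat y0 b0 x a i * (∑ e, colsVp V p x a e * (Q0mat y0 b0 x)⁻¹ e c)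
                * fderiv ℝ u x (Pi.single k 1) c := Finset.sum_comm
          _ = ∑ c, (∑ a, Q0mat y0 b0 x a i
                * (∑ e, colsVp V p x a e * (Q0mat y0 b0 x)⁻¹ e c))
                * fderiv ℝ u x (Pi.single k 1) c :=
              Finset.sum_congr rfl fun c _ => (Finset.sum_mul _ _ _).symm
          _ = ∑ c, -(colsVp V p x c i) * fderiv ℝ u x (Pi.single k 1) c :=
              Finset.sum_congr rfl fun c _ => by rw [hQS i c]
      rw [h1, Finset.sum_sub_distrib, h2]
      have h3 : ∑ c, -(colsVp V p x c i) * fderiv ℝ u x (Pi.single k 1) c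
          = -∑ c, colsVp V p x c i * fderiv ℝ u x (Pi.single k 1) c := by
        rw [← Finset.sum_neg_distrib]
        exact Finset.sum_congr rfl fun c _ => by ring
      rw [h3]
      ring
    have P0 : ∀ i : Fin 3, ∑ a, Q0mat y0 b0 x a i * (∑ c, A a c * pder 0 y0 x c)
        = (∑ a, Q0mat y0 b0 x a i * fderiv ℝ (fun y => pder 0 V y) x (Pi.single k 1) a)
          + (∑ c, colsVp V p x c i * fderiv ℝ (fun y => pder 0 y0 y) x (Pi.single k 1) c) :=
      pair (fun y => pder 0 y0 y) (fun y => pder 0 V y) K0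
    have P1 : ∀ i : Fin 3, ∑ a, Q0mat y0 b0 x a i * (∑ c, A a c * pder 1 y0 x c)
        = (∑ a, Q0mat y0 b0 x a i * fderiv ℝ (fun y => pder 1 V y) x (Pi.single k 1) a)
          + (∑ c, colsVp V p x c i * fderiv ℝ (fun y => pder 1 y0 y) x (Pi.single k 1) c) :=
      pair (fun y => pder 1 y0 y) (fun y => pder 1 V y) K1
    have P2 : ∀ i : Fin 3, ∑ a, Q0mat y0 b0 x a i * (∑ c, A a c * b0 x c)
        = (∑ a, Q0mat y0 b0 x a i * fderiv ℝ p x (Pi.single k 1) a)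
          + (∑ c, colsVp V p x c i * fderiv ℝ b0 x (Pi.single k 1) c) :=
      pair b0 p K2
    have hstep0 : ∀ i : Fin 3, ∑ a, (Q0mat y0 b0 x)ᵀ i a * (A * Q0mat y0 b0 x) a 0
        = ∑ a, Q0mat y0 b0 x a i * (∑ c, A a c * pder 0 y0 x c) := by
      intro i
      refine Finset.sum_congr rfl fun a _ => ?_
      rw [Matrix.transpose_apply, Matrix.mul_apply]
      congr 1
    have hstep1 : ∀ i : Fin 3, ∑ a, (Q0mat y0 b0 x)ᵀ i a * (A * Q0mat y0 b0 x) a 1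
        = ∑ a, Q0mat y0 b0 x a i * (∑ c, A a c * pder 1 y0 x c) := by
      intro i
      refine Finset.sum_congr rfl fun a _ => ?_
      rw [Matrix.transpose_apply, Matrix.mul_apply]
      congr 1
    have hstep2 : ∀ i : Fin 3, ∑ a, (Q0mat y0 b0 x)ᵀ i a * (A * Q0mat y0 b0 x) a 2
        = ∑ a, Q0mat y0 b0 x a i * (∑ c, A a c * b0 x c) := by
      intro i
      refine Finset.sum_congr rfl fun a _ => ?_
      rw [Matrix.transpose_apply, Matrix.mul_apply]
      congr 1
    have E00 : ∑ a, (Q0mat y0 b0 x)ᵀ (0:Fin 3) a * (A * Q0mat y0 b0 x) a (0:Fin 3) = 0 := by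
      rw [hstep0 0, P0 0]
      have h1 : (∑ a, Q0mat y0 b0 x a (0:Fin 3) * fderiv ℝ (fun y => pder 0 V y) x (Pi.single k 1) a)
          = ∑ a, pder 0 y0 x a * fderiv ℝ (fun y => pder 0 V y) x (Pi.single k 1) a :=
        Finset.sum_congr rfl fun a _ => by rw [eQ0]
      have h2 : (∑ c, colsVp V p x c (0:Fin 3) * fderiv ℝ (fun y => pder 0 y0 y) x (Pi.single k 1) c)
          = ∑ c, pder 0 V x c * fderiv ℝ (fun y => pder 0 y0 y) x (Pi.single k 1) c :=
        Finset.sum_congr rfl fun c _ => by rw [eC0]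
      rw [h1, h2]
      exact hDzero x hx 0 0 k
    have E01 : ∑ a, (Q0mat y0 b0 x)ᵀ (0:Fin 3) a * (A * Q0mat y0 b0 x) a (1:Fin 3) = 0 := by
      rw [hstep1 0, P1 0]
      have h1 : (∑ a, Q0mat y0 b0 x a (0:Fin 3) * fderiv ℝ (fun y => pder 1 V y) x (Pi.single k 1) a)
          = ∑ a, pder 0 y0 x a * fderiv ℝ (fun y => pder 1 V y) x (Pi.single k 1) a :=
        Finset.sum_congr rfl fun a _ => by rw [eQ0]
      have h2 : (∑ c, colsVp V p x c (0:Fin 3) * fderiv ℝ (fun y => pder 1 y0 y) x (Pi.single k 1) c)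
          = ∑ c, pder 0 V x c * fderiv ℝ (fun y => pder 1 y0 y) x (Pi.single k 1) c :=
        Finset.sum_congr rfl fun c _ => by rw [eC0]
      rw [h1, h2]
      exact hDzero x hx 0 1 k
    have E02 : ∑ a, (Q0mat y0 b0 x)ᵀ (0:Fin 3) a * (A * Q0mat y0 b0 x) a (2:Fin 3) = 0 := by
      rw [hstep2 0, P2 0]
      have h1 : (∑ a, Q0mat y0 b0 x a (0:Fin 3) * fderiv ℝ p x (Pi.single k 1) a)
          = ∑ a, pder 0 y0 x a * fderiv ℝ p x (Pi.single k 1) a :=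
        Finset.sum_congr rfl fun a _ => by rw [eQ0]
      have h2 : (∑ c, colsVp V p x c (0:Fin 3) * fderiv ℝ b0 x (Pi.single k 1) c)
          = ∑ c, pder 0 V x c * fderiv ℝ b0 x (Pi.single k 1) c :=
        Finset.sum_congr rfl fun c _ => by rw [eC0]
      rw [h1, h2]
      exact hbend x hx 0 k
    have E10 : ∑ a, (Q0mat y0 b0 x)ᵀ (1:Fin 3) a * (A * Q0mat y0 b0 x) a (0:Fin 3) = 0 := by
      rw [hstep0 1, P0 1]
      have h1 : (∑ a, Q0mat y0 b0 x a (1:Fin 3) * fderiv ℝ (fun y => pder 0 V y) x (Pi.single k 1) a)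
          = ∑ a, pder 1 y0 x a * fderiv ℝ (fun y => pder 0 V y) x (Pi.single k 1) a :=
        Finset.sum_congr rfl fun a _ => by rw [eQ1]
      have h2 : (∑ c, colsVp V p x c (1:Fin 3) * fderiv ℝ (fun y => pder 0 y0 y) x (Pi.single k 1) c)
          = ∑ c, pder 1 V x c * fderiv ℝ (fun y => pder 0 y0 y) x (Pi.single k 1) c :=
        Finset.sum_congr rfl fun c _ => by rw [eC1]
      rw [h1, h2]
      exact hDzero x hx 1 0 k
    have E11 : ∑ a, (Q0mat y0 b0 x)ᵀ (1:Fin 3) a * (A * Q0mat y0 b0 x) a (1:Fin 3) = 0 := by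
      rw [hstep1 1, P1 1]
      have h1 : (∑ a, Q0mat y0 b0 x a (1:Fin 3) * fderiv ℝ (fun y => pder 1 V y) x (Pi.single k 1) a)
          = ∑ a, pder 1 y0 x a * fderiv ℝ (fun y => pder 1 V y) x (Pi.single k 1) a :=
        Finset.sum_congr rfl fun a _ => by rw [eQ1]
      have h2 : (∑ c, colsVp V p x c (1:Fin 3) * fderiv ℝ (fun y => pder 1 y0 y) x (Pi.single k 1) c)
          = ∑ c, pder 1 V x c * fderiv ℝ (fun y => pder 1 y0 y) x (Pi.single k 1) c :=
        Finset.sum_congr rfl fun c _ => by rw [eC1]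
      rw [h1, h2]
      exact hDzero x hx 1 1 k
    have E12 : ∑ a, (Q0mat y0 b0 x)ᵀ (1:Fin 3) a * (A * Q0mat y0 b0 x) a (2:Fin 3) = 0 := by
      rw [hstep2 1, P2 1]
      have h1 : (∑ a, Q0mat y0 b0 x a (1:Fin 3) * fderiv ℝ p x (Pi.single k 1) a)
          = ∑ a, pder 1 y0 x a * fderiv ℝ p x (Pi.single k 1) a :=
        Finset.sum_congr rfl fun a _ => by rw [eQ1]
      have h2 : (∑ c, colsVp V p x c (1:Fin 3) * fderiv ℝ b0 x (Pi.single k 1) c)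
          = ∑ c, pder 1 V x c * fderiv ℝ b0 x (Pi.single k 1) c :=
        Finset.sum_congr rfl fun c _ => by rw [eC1]
      rw [h1, h2]
      exact hbend x hx 1 k
    have E20 : ∑ a, (Q0mat y0 b0 x)ᵀ (2:Fin 3) a * (A * Q0mat y0 b0 x) a (0:Fin 3) = 0 := by
      rw [hstep0 2, P0 2]
      have h1 : (∑ a, Q0mat y0 b0 x a (2:Fin 3) * fderiv ℝ (fun y => pder 0 V y) x (Pi.single k 1) a)
          = ∑ a, b0 x a * fderiv ℝ (fun y => pder 0 V y) x (Pi.single k 1) a :=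
        Finset.sum_congr rfl fun a _ => by rw [eQ2]
      have h2 : (∑ c, colsVp V p x c (2:Fin 3) * fderiv ℝ (fun y => pder 0 y0 y) x (Pi.single k 1) c)
          = ∑ c, p x c * fderiv ℝ (fun y => pder 0 y0 y) x (Pi.single k 1) c :=
        Finset.sum_congr rfl fun c _ => by rw [eC2]
      rw [h1, h2]
      exact hE3 x hx 0 k
    have E21 : ∑ a, (Q0mat y0 b0 x)ᵀ (2:Fin 3) a * (A * Q0mat y0 b0 x) a (1:Fin 3) = 0 := by
      rw [hstep1 2, P1 2]
      have h1 : (∑ a, Q0mat y0 b0 x a (2:Fin 3) * fderiv ℝ (fun y => pder 1 V y) x (Pi.single k 1) a)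
          = ∑ a, b0 x a * fderiv ℝ (fun y => pder 1 V y) x (Pi.single k 1) a :=
        Finset.sum_congr rfl fun a _ => by rw [eQ2]
      have h2 : (∑ c, colsVp V p x c (2:Fin 3) * fderiv ℝ (fun y => pder 1 y0 y) x (Pi.single k 1) c)
          = ∑ c, p x c * fderiv ℝ (fun y => pder 1 y0 y) x (Pi.single k 1) c :=
        Finset.sum_congr rfl fun c _ => by rw [eC2]
      rw [h1, h2]
      exact hE3 x hx 1 k
    have E22 : ∑ a, (Q0mat y0 b0 x)ᵀ (2:Fin 3) a * (A * Q0mat y0 b0 x) a (2:Fin 3) = 0 := by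
      rw [hstep2 2, P2 2]
      have h1 : (∑ a, Q0mat y0 b0 x a (2:Fin 3) * fderiv ℝ p x (Pi.single k 1) a)
          = ∑ a, b0 x a * fderiv ℝ p x (Pi.single k 1) a :=
        Finset.sum_congr rfl fun a _ => by rw [eQ2]
      have h2 : (∑ c, colsVp V p x c (2:Fin 3) * fderiv ℝ b0 x (Pi.single k 1) c)
          = ∑ c, p x c * fderiv ℝ b0 x (Pi.single k 1) c :=
        Finset.sum_congr rfl fun c _ => by rw [eC2]
      rw [h1, h2]
      exact hE4 x hx k
    have hQAQ : (Q0mat y0 b0 x)ᵀ * (A * Q0mat y0 b0 x) = 0 := by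
      ext i j
      rw [Matrix.mul_apply, Matrix.zero_apply]
      fin_cases i <;> fin_cases j
      · exact E00
      · exact E01
      · exact E02
      · exact E10
      · exact E11
      · exact E12
      · exact E20
      · exact E21
      · exact E22
    have hAQ : A * Q0mat y0 b0 x = 0 := by
      have h5 := congrArg (fun M => ((Q0mat y0 b0 x)ᵀ)⁻¹ * M) hQAQ
      simpa [Matrix.nonsing_inv_mul_cancel_left _ _ (huT x hx)] using h5
    have h6 := congrArg (fun M => M * (Q0mat y0 b0 x)⁻¹) hAQ
    simpa [Matrix.mul_assoc, Matrix.mul_nonsing_inv _ (hu x hx)] using h6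
  have hsconst : ∀ (a b : Fin 3), ∀ x ∈ ω,
      (colsVp V p x * (Q0mat y0 b0 x)⁻¹) a b
        = (colsVp V p x₀ * (Q0mat y0 b0 x₀)⁻¹) a b := by
    intro a b x hx
    rw [Matrix.mul_apply, Matrix.mul_apply]
    refine AuxIK.isConst_of_hasFDerivAt_zero (f := fun y => ∑ c, colsVp V p y a c * (Q0mat y0 b0 y)⁻¹ c b) hω hpc ?_ x₀ hx₀ x hx
    intro z hz
    have hd := hsdA a b z hz
    have h0 : fderiv ℝ (fun y => ∑ c, colsVp V p y a c * (Q0mat y0 b0 y)⁻¹ c b) z = 0 :=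
      AuxIK.clm_eq_zero (fun k => hA0 z hz k a b)
    have := hd.hasFDerivAt
    rwa [h0] at this
  have hconstS : ∀ x ∈ ω, colsVp V p x * (Q0mat y0 b0 x)⁻¹
      = colsVp V p x₀ * (Q0mat y0 b0 x₀)⁻¹ := by
    intro x hx; ext a b; exact hsconst a b x hx
  refine ⟨colsVp V p x₀ * (Q0mat y0 b0 x₀)⁻¹, hskew x₀ hx₀,
    fun a => V x₀ a - ∑ b, (colsVp V p x₀ * (Q0mat y0 b0 x₀)⁻¹) a b * y0 x₀ b,
    hconstS, ?_⟩
  intro x hx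
  have hSQ2 : ∀ z ∈ ω, ∀ (a kk : Fin 3),
      (∑ b, (colsVp V p x₀ * (Q0mat y0 b0 x₀)⁻¹) a b * Q0mat y0 b0 z b kk)
        = colsVp V p z a kk := by
    intro z hz a kk
    have h := hSQ z hz
    rw [hconstS z hz] at h
    have h2 := congrFun (congrFun h a) kk
    rw [Matrix.mul_apply] at h2
    exact h2
  have hphi : ∀ a : Fin 3, ∀ z ∈ ω, HasFDerivAt
      (fun y => V y a - ∑ b, (colsVp V p x₀ * (Q0mat y0 b0 x₀)⁻¹) a b * y0 y b)
      (0 : (Fin 2 → ℝ) →L[ℝ] ℝ) z := by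
    intro a z hz
    have hd1 : DifferentiableAt ℝ (fun y => V y a) z := AuxIK.comp_proj_diff (hVfdA z hz) a
    have hd2 : DifferentiableAt ℝ
        (fun y => ∑ b, (colsVp V p x₀ * (Q0mat y0 b0 x₀)⁻¹) a b * y0 y b) z :=
      DifferentiableAt.fun_sum fun b _ =>
        (differentiableAt_const _).mul (AuxIK.comp_proj_diff (hy0dA z hz) b)
    have hdz := hd1.fun_sub hd2
    have h0 : fderiv ℝ
        (fun y => V y a - ∑ b, (colsVp V p x₀ * (Q0mat y0 b0 x₀)⁻¹) a b * y0 y b) z = 0 := by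
      apply AuxIK.clm_eq_zero
      intro k
      have hsplit : fderiv ℝ
            (fun y => V y a - ∑ b, (colsVp V p x₀ * (Q0mat y0 b0 x₀)⁻¹) a b * y0 y b) z
            (Pi.single k 1)
          = fderiv ℝ (fun y => V y a) z (Pi.single k 1)
            - fderiv ℝ (fun y => ∑ b, (colsVp V p x₀ * (Q0mat y0 b0 x₀)⁻¹) a b * y0 y b) z
                (Pi.single k 1) := by
        rw [fderiv_fun_sub hd1 hd2]; rfl
      have e1 : fderiv ℝ
            (fun y => ∑ b, (colsVp V p x₀ * (Q0mat y0 b0 x₀)⁻¹) a b * y0 y b) z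
            (Pi.single k 1)
          = ∑ b, (fderiv ℝ (fun _ => (colsVp V p x₀ * (Q0mat y0 b0 x₀)⁻¹) a b) z
                (Pi.single k 1) * y0 z b
              + (colsVp V p x₀ * (Q0mat y0 b0 x₀)⁻¹) a b
                * fderiv ℝ (fun y => y0 y b) z (Pi.single k 1)) :=
        AuxIK.fderiv_sum_mul (fun b => differentiableAt_const _)
          (fun b => AuxIK.comp_proj_diff (hy0dA z hz) b) _
      have e2 : ∀ b : Fin 3, fderiv ℝ (fun y => y0 y b) z (Pi.single k 1)
          = fderiv ℝ y0 z (Pi.single k 1) b :=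
        fun b => AuxIK.fderiv_comp_proj (hy0dA z hz) b _
      have e3 : fderiv ℝ (fun y => V y a) z (Pi.single k 1)
          = fderiv ℝ V z (Pi.single k 1) a := AuxIK.fderiv_comp_proj (hVfdA z hz) a _
      rw [hsplit, e3, e1]
      simp only [fderiv_fun_const, Pi.zero_apply, ContinuousLinearMap.zero_apply, zero_mul,
        zero_add, e2]
      fin_cases k
      · show fderiv ℝ V z (Pi.single (0:Fin 2) 1) a
            - ∑ b, (colsVp V p x₀ * (Q0mat y0 b0 x₀)⁻¹) a b
                * fderiv ℝ y0 z (Pi.single (0:Fin 2) 1) b = 0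
        have r1 : fderiv ℝ V z (Pi.single (0:Fin 2) 1) a = colsVp V p z a (0:Fin 3) := rfl
        have r2 : ∀ b : Fin 3, fderiv ℝ y0 z (Pi.single (0:Fin 2) 1) b
            = Q0mat y0 b0 z b (0:Fin 3) := fun b => rfl
        rw [r1]
        simp only [r2]
        rw [hSQ2 z hz a 0]
        exact sub_self _
      · show fderiv ℝ V z (Pi.single (1:Fin 2) 1) a
            - ∑ b, (colsVp V p x₀ * (Q0mat y0 b0 x₀)⁻¹) a b
                * fderiv ℝ y0 z (Pi.single (1:Fin 2) 1) b = 0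
        have r1 : fderiv ℝ V z (Pi.single (1:Fin 2) 1) a = colsVp V p z a (1:Fin 3) := rfl
        have r2 : ∀ b : Fin 3, fderiv ℝ y0 z (Pi.single (1:Fin 2) 1) b
            = Q0mat y0 b0 z b (1:Fin 3) := fun b => rfl
        rw [r1]
        simp only [r2]
        rw [hSQ2 z hz a 1]
        exact sub_self _
    have h := hdz.hasFDerivAt
    rwa [h0] at h
  funext a
  have hconstphi := AuxIK.isConst_of_hasFDerivAt_zero hω hpc (hphi a) x₀ hx₀ x hx
  simp only [Pi.add_apply]
  have hmv : (colsVp V p x₀ * (Q0mat y0 b0 x₀)⁻¹).mulVec (y0 x) a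
      = ∑ b, (colsVp V p x₀ * (Q0mat y0 b0 x₀)⁻¹) a b * y0 x b := rfl
  rw [hmv]
  linarith [hconstphi]
end

section
/- Let Q₃ be a nonnegative quadratic form on 3×3 real matrices that depends only on the symmetric part of its argument and is positive definite on symmetric matrices, and let A ∈ ℝ^{3×3} be symmetric positive definite. Define, for F ∈ ℝ^{2×2}, Q₂(F) = min{ Q₃(A^{−1} F̃ A^{−1}) : F̃ ∈ ℝ^{3×3}, F̃_{2×2} = F }, where F̃_{2×2} is the principal 2×2 minor. Then Q₂ is a nonnegative quadratic form on ℝ^{2×2}, depends only on the symmetric part of F, and is positive definite on symmetric 2×2 matrices. -/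
open Matrix

/-!
Write `Q₃(A⁻¹ F̃ A⁻¹) = B(F̃, F̃)` for a symmetric bilinear form `B`, so that `Q₂(F)` is the minimum
of `B` over the affine fibre `{F̃ : F̃_{2×2} = F}` of the linear restriction map `P`. A minimiser
is `B`-orthogonal to `ker P` (first variation), and `B` takes a single value on each fibre of
`P` inside the orthogonal complement `U` of `ker P`. Hence `Q₂ = B ∘ (S, S)` for a linear right
inverse `S` of `P|_U`, a quadratic form. Changing `F` by a skew matrix changes `F̃` by its skew
extension by zero, which `Q₃` does not see after conjugation by the symmetric `A⁻¹`; and for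
symmetric `F ≠ 0` the symmetric part of any extension is nonzero, so `Q₃` is positive on it.
-/

section MinimumOverFibers

variable {K V W : Type*} [Field K] [LinearOrder K] [IsStrictOrderedRing K]
  [AddCommGroup V] [Module K V] [AddCommGroup W] [Module K W]
  {B : LinearMap.BilinForm K V} {P : V →ₗ[K] W}

/-- First variation: `B (x₀ + t • g) (x₀ + t • g) - B x₀ x₀` is a quadratic polynomial in `t`
without constant term, so it can only be nonnegative if its linear coefficient vanishes. -/
theorem mem_orthogonal_ker_of_forall_le (hB : ∀ x y, B x y = B y x) {x₀ : V}
    (hmin : ∀ x, P x = P x₀ → B x₀ x₀ ≤ B x x) : x₀ ∈ B.orthogonal (LinearMap.ker P) := by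
  intro g hg
  have hpoly : ∀ t : K, 0 ≤ B g g * (t * t) + 2 * B g x₀ * t + 0 := fun t => by
    have := hmin (x₀ + t • g) (by simp [LinearMap.mem_ker.mp hg])
    simp only [map_add, map_smul, LinearMap.add_apply, LinearMap.smul_apply, smul_eq_mul,
      hB x₀ g] at this
    linarith
  have := discrim_le_zero hpoly
  rw [discrim] at this
  nlinarith [sq_nonneg (B g x₀)]

theorem apply_self_eq_of_mem_orthogonal_ker (hB : ∀ x y, B x y = B y x) {x x' : V}
    (hx : x ∈ B.orthogonal (LinearMap.ker P)) (hx' : x' ∈ B.orthogonal (LinearMap.ker P))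
    (hPx : P x = P x') : B x x = B x' x' := by
  have hg : x' - x ∈ LinearMap.ker P := by simp [hPx]
  have h := hx _ hg
  have h' := hx' _ hg
  simp only [map_sub, LinearMap.sub_apply, hB x' x] at h h'
  linarith

theorem exists_bilinForm_eq_of_isLeast (hB : ∀ x y, B x y = B y x) {q : W → K}
    (hq : ∀ y, IsLeast {r | ∃ x, P x = y ∧ r = B x x} (q y)) :
    ∃ B' : LinearMap.BilinForm K W, (∀ y z, B' y z = B' z y) ∧ ∀ y, q y = B' y y := by
  set U := B.orthogonal (LinearMap.ker P)
  have hminU : ∀ y, ∃ x ∈ U, P x = y ∧ q y = B x x := by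
    intro y
    obtain ⟨⟨x, hx, hqx⟩, hlow⟩ := hq y
    refine ⟨x, mem_orthogonal_ker_of_forall_le hB fun x' hx' => ?_, hx, hqx⟩
    exact hqx ▸ hlow ⟨x', hx'.trans hx, rfl⟩
  obtain ⟨S, hS⟩ := (P ∘ₗ U.subtype).exists_rightInverse_of_surjective <|
    LinearMap.range_eq_top.mpr fun y =>
      let ⟨x, hxU, hx, _⟩ := hminU y
      ⟨⟨x, hxU⟩, hx⟩
  refine ⟨B.compl₁₂ (U.subtype ∘ₗ S) (U.subtype ∘ₗ S), fun y z => hB _ _, fun y => ?_⟩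
  obtain ⟨x, hxU, hx, hqx⟩ := hminU y
  rw [hqx]
  exact apply_self_eq_of_mem_orthogonal_ker hB hxU (S y).2
    (hx.trans (LinearMap.congr_fun hS y).symm)

end MinimumOverFibers

section SymmetricPart

variable {m : Type*}

noncomputable def symmPart (X : Matrix m m ℝ) : Matrix m m ℝ := (1/2 : ℝ) • (X + Xᵀ)

theorem transpose_symmPart (X : Matrix m m ℝ) : (symmPart X)ᵀ = symmPart X := by
  simp [symmPart, add_comm]

theorem symmPart_add_of_transpose_eq_neg (X : Matrix m m ℝ) {Y : Matrix m m ℝ}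
    (hY : Yᵀ = -Y) : symmPart (X + Y) = symmPart X := by
  simp only [symmPart, transpose_add, hY]
  abel_nf

theorem transpose_sub_symmPart (X : Matrix m m ℝ) : (X - symmPart X)ᵀ = -(X - symmPart X) := by
  ext i j
  simp only [symmPart, transpose_apply, Matrix.sub_apply, Matrix.smul_apply, Matrix.add_apply,
    Matrix.neg_apply, smul_eq_mul]
  ring

variable [Fintype m]

theorem symmPart_mul_mul {M : Matrix m m ℝ} (hM : Mᵀ = M) (X : Matrix m m ℝ) :
    symmPart (M * X * M) = M * symmPart X * M := by
  simp only [symmPart, transpose_mul, hM, Matrix.mul_add, Matrix.add_mul, Matrix.mul_smul,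
    Matrix.smul_mul, Matrix.mul_assoc]

theorem apply_mul_mul_symmPart {Q : Matrix m m ℝ → ℝ} (hQ : ∀ X, Q X = Q (symmPart X))
    {M : Matrix m m ℝ} (hM : Mᵀ = M) (X : Matrix m m ℝ) :
    Q (M * X * M) = Q (M * symmPart X * M) := by
  rw [hQ (M * X * M), symmPart_mul_mul hM]

end SymmetricPart

section PrincipalMinor

variable {n : ℕ}

def submatrixCastSucc (n : ℕ) :
    Matrix (Fin (n + 1)) (Fin (n + 1)) ℝ →ₗ[ℝ] Matrix (Fin n) (Fin n) ℝ where
  toFun X := X.submatrix Fin.castSucc Fin.castSucc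
  map_add' _ _ := rfl
  map_smul' _ _ := rfl

def extendByZero (F : Matrix (Fin n) (Fin n) ℝ) : Matrix (Fin (n + 1)) (Fin (n + 1)) ℝ :=
  Matrix.of fun i j => Fin.lastCases 0 (fun i' => Fin.lastCases 0 (F i') j) i

@[simp]
theorem extendByZero_castSucc (F : Matrix (Fin n) (Fin n) ℝ) (i j : Fin n) :
    extendByZero F i.castSucc j.castSucc = F i j := by
  simp [extendByZero]

theorem transpose_extendByZero_of_transpose_eq_neg {F : Matrix (Fin n) (Fin n) ℝ}
    (hF : Fᵀ = -F) : (extendByZero F)ᵀ = -extendByZero F := by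
  ext i j
  induction i using Fin.lastCases <;> induction j using Fin.lastCases <;>
    simp only [extendByZero, transpose_apply, of_apply, Fin.lastCases_castSucc,
      Fin.lastCases_last, Matrix.neg_apply, neg_zero]
  exact congr_fun₂ hF _ _

def extensionValues (Q : Matrix (Fin (n + 1)) (Fin (n + 1)) ℝ → ℝ)
    (M : Matrix (Fin (n + 1)) (Fin (n + 1)) ℝ) (F : Matrix (Fin n) (Fin n) ℝ) : Set ℝ :=
  {r | ∃ Ft : Matrix (Fin (n + 1)) (Fin (n + 1)) ℝ,
    (∀ i j : Fin n, Ft i.castSucc j.castSucc = F i j) ∧ r = Q (M * Ft * M)}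

variable {Q : Matrix (Fin (n + 1)) (Fin (n + 1)) ℝ → ℝ}
  {M : Matrix (Fin (n + 1)) (Fin (n + 1)) ℝ}

theorem extensionValues_eq_bilinForm
    {B : LinearMap.BilinForm ℝ (Matrix (Fin (n + 1)) (Fin (n + 1)) ℝ)} (hBQ : ∀ X, Q X = B X X)
    (F : Matrix (Fin n) (Fin n) ℝ) :
    extensionValues Q M F = {r | ∃ X, submatrixCastSucc n X = F ∧
      r = B.compl₁₂ (LinearMap.mulLeftRight ℝ (M, M)) (LinearMap.mulLeftRight ℝ (M, M)) X X} := by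
  ext r
  simp only [extensionValues, Set.mem_ofPred_eq, hBQ, ← Matrix.ext_iff]
  rfl

/-- Adding to `F̃` the extension by zero of the skew matrix `F - F'` turns an extension of `F'`
into one of `F` without changing its symmetric part. -/
theorem le_of_isLeast_extensionValues (hQ : ∀ X, Q X = Q (symmPart X)) (hM : Mᵀ = M)
    {F F' : Matrix (Fin n) (Fin n) ℝ} (hskew : (F - F')ᵀ = -(F - F')) {a a' : ℝ}
    (ha : IsLeast (extensionValues Q M F) a) (ha' : IsLeast (extensionValues Q M F') a') :
    a ≤ a' := by
  obtain ⟨Ft', hFt', rfl⟩ := ha'.1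
  refine ha.2 ⟨Ft' + extendByZero (F - F'), fun i j => by simp [hFt'], ?_⟩
  rw [apply_mul_mul_symmPart hQ hM Ft', apply_mul_mul_symmPart hQ hM (Ft' + _),
    symmPart_add_of_transpose_eq_neg _ (transpose_extendByZero_of_transpose_eq_neg hskew)]

theorem eq_of_isLeast_extensionValues (hQ : ∀ X, Q X = Q (symmPart X)) (hM : Mᵀ = M)
    {F F' : Matrix (Fin n) (Fin n) ℝ} (hskew : (F - F')ᵀ = -(F - F')) {a a' : ℝ}
    (ha : IsLeast (extensionValues Q M F) a) (ha' : IsLeast (extensionValues Q M F') a') :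
    a = a' := by
  have hskew' : (F' - F)ᵀ = -(F' - F) := by rw [← neg_sub, transpose_neg, hskew]
  exact le_antisymm (le_of_isLeast_extensionValues hQ hM hskew ha ha')
    (le_of_isLeast_extensionValues hQ hM hskew' ha' ha)

theorem pos_of_mem_extensionValues (hQ : ∀ X, Q X = Q (symmPart X))
    (hpos : ∀ X, Xᵀ = X → X ≠ 0 → 0 < Q X) (hM : Mᵀ = M) (hMunit : IsUnit M)
    {F : Matrix (Fin n) (Fin n) ℝ} (hF : Fᵀ = F) (hF0 : F ≠ 0) {r : ℝ}
    (hr : r ∈ extensionValues Q M F) : 0 < r := by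
  obtain ⟨Ft, hFt, rfl⟩ := hr
  rw [apply_mul_mul_symmPart hQ hM]
  refine hpos _ (by rw [← symmPart_mul_mul hM, transpose_symmPart]) fun h => hF0 ?_
  rw [hMunit.mul_left_eq_zero, hMunit.mul_right_eq_zero] at h
  ext i j
  have hij := congr_fun₂ h i.castSucc j.castSucc
  have hFji : F j i = F i j := congr_fun₂ hF i j
  simp only [symmPart, Matrix.smul_apply, Matrix.add_apply, transpose_apply, hFt, hFji,
    Matrix.zero_apply, smul_eq_mul] at hij ⊢
  linarith

end PrincipalMinor

/-- If `Q₃` is a nonnegative quadratic form on `3×3` matrices depending only on the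
symmetric part and positive definite on symmetric matrices, and `A` is symmetric
positive definite, then the reduced form
`Q₂(F) = min{Q₃(A⁻¹F̃A⁻¹) : F̃_{2×2} = F}` is a nonnegative quadratic form on
`2×2` matrices, depends only on the symmetric part, and is positive definite on
symmetric `2×2` matrices. -/
theorem reduced_quadratic_form_properties
    (Q3 : Matrix (Fin 3) (Fin 3) ℝ → ℝ)
    (hquad : ∃ B : Matrix (Fin 3) (Fin 3) ℝ →ₗ[ℝ] Matrix (Fin 3) (Fin 3) ℝ →ₗ[ℝ] ℝ,
      (∀ X Y, B X Y = B Y X) ∧ ∀ X, Q3 X = B X X)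
    (hsym : ∀ X : Matrix (Fin 3) (Fin 3) ℝ, Q3 X = Q3 ((1/2 : ℝ) • (X + Xᵀ)))
    (hnonneg : ∀ X, 0 ≤ Q3 X)
    (hposdef : ∀ X : Matrix (Fin 3) (Fin 3) ℝ, Xᵀ = X → X ≠ 0 → 0 < Q3 X)
    (A : Matrix (Fin 3) (Fin 3) ℝ) (hA : A.PosDef)
    (Q2 : Matrix (Fin 2) (Fin 2) ℝ → ℝ)
    (hQ2 : ∀ F : Matrix (Fin 2) (Fin 2) ℝ,
      IsLeast {r : ℝ | ∃ Ft : Matrix (Fin 3) (Fin 3) ℝ,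
        (∀ i j : Fin 2, Ft (Fin.castSucc i) (Fin.castSucc j) = F i j) ∧
        r = Q3 (A⁻¹ * Ft * A⁻¹)} (Q2 F)) :
    (∃ B2 : Matrix (Fin 2) (Fin 2) ℝ →ₗ[ℝ] Matrix (Fin 2) (Fin 2) ℝ →ₗ[ℝ] ℝ,
      (∀ X Y, B2 X Y = B2 Y X) ∧ ∀ F, Q2 F = B2 F F) ∧
    (∀ F, 0 ≤ Q2 F) ∧
    (∀ F : Matrix (Fin 2) (Fin 2) ℝ, Q2 F = Q2 ((1/2 : ℝ) • (F + Fᵀ))) ∧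
    (∀ F : Matrix (Fin 2) (Fin 2) ℝ, Fᵀ = F → F ≠ 0 → 0 < Q2 F) := by
  obtain ⟨B, hB, hBQ⟩ := hquad
  have hmin : ∀ F, IsLeast (extensionValues Q3 A⁻¹ F) (Q2 F) := hQ2
  have hAinv : A⁻¹ᵀ = A⁻¹ := by simpa using hA.inv.1.eq
  refine ⟨?_, fun F => ?_, fun F => ?_, fun F hF hF0 => ?_⟩
  · set C := LinearMap.mulLeftRight ℝ (A⁻¹, A⁻¹)
    exact exists_bilinForm_eq_of_isLeast (B := B.compl₁₂ C C) (P := submatrixCastSucc 2)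
      (fun _ _ => hB _ _) fun F => extensionValues_eq_bilinForm hBQ F ▸ hmin F
  · obtain ⟨Ft, -, hFt⟩ := (hQ2 F).1
    exact hFt ▸ hnonneg _
  · exact eq_of_isLeast_extensionValues hsym hAinv (transpose_sub_symmPart F) (hmin F) (hmin _)
  · exact pos_of_mem_extensionValues hsym hposdef hAinv hA.inv.isUnit hF hF0 (hmin F).1
end
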